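/- With the subdivision setup below, for n ≥ 2 and each i ∈ Fin e', the point cloud M_i indexed by σ ∈ S with position M_i(σ) = μ(X^σ_i) (unit weights) satisfies Rg²(M_i) = (n²(n+1)/(12(n−1)²))·Rg²(W_i), where W_i = (w(i,1),…,w(i,n)) is a point cloud with unit weights. -/
import Mathlib

open Finset
open scoped RealInnerProductSpace

/-- Center of mass of a weighted point cloud. -/
noncomputable def com {V : Type*} [Fintype V] {d : ℕ}
    (X : V → EuclideanSpace ℝ (Fin d)) (Ω : V → ℝ) : EuclideanSpace ℝ (Fin d) :=
  (∑ v, Ω v)⁻¹ • ∑ v, Ω v • X v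

/-- Weighted squared radius of gyration of a point cloud. -/
noncomputable def rg2 {V : Type*} [Fintype V] {d : ℕ}
    (X : V → EuclideanSpace ℝ (Fin d)) (Ω : V → ℝ) : ℝ :=
  (∑ v, Ω v)⁻¹ * ∑ v, Ω v * ‖X v - com X Ω‖ ^ 2

/-- Center of mass with unit weights. -/
noncomputable def uMu {V : Type*} [Fintype V] {d : ℕ}
    (X : V → EuclideanSpace ℝ (Fin d)) : EuclideanSpace ℝ (Fin d) :=
  (Fintype.card V : ℝ)⁻¹ • ∑ v, X v

/-- Squared radius of gyration with unit weights. -/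
noncomputable def uRg2 {V : Type*} [Fintype V] {d : ℕ}
    (X : V → EuclideanSpace ℝ (Fin d)) : ℝ :=
  (Fintype.card V : ℝ)⁻¹ * ∑ v, ‖X v - uMu X‖ ^ 2

/-- Position of the `j`-th intermediate vertex (1-indexed position `j+1`) on the
subdivided edge `i`, for the permuted displacement vectors: `x^σ_{i,j}` equals
`X'(tail i)` plus the first `j+1` permuted displacements. -/
noncomputable def xpos {d n v' e' : ℕ}
    (X' : Fin v' → EuclideanSpace ℝ (Fin d)) (tl : Fin e' → Fin v')
    (w : Fin e' → Fin n → EuclideanSpace ℝ (Fin d))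
    (σ : Fin e' → Equiv.Perm (Fin n)) (i : Fin e') (j : Fin (n - 1)) :
    EuclideanSpace ℝ (Fin d) :=
  X' (tl i) + ∑ k : Fin n, if (k : ℕ) ≤ (j : ℕ) then w i (σ i k) else 0

section helpers

variable {d : ℕ} {V W : Type*} [Fintype V] [Fintype W]

lemma uMu_comp_equiv (e : W ≃ V) (f : V → EuclideanSpace ℝ (Fin d)) :
    uMu (f ∘ e) = uMu f := by
  simp only [uMu, Fintype.card_congr e, Function.comp]
  rw [Equiv.sum_comp e f]

lemma uRg2_comp_equiv (e : W ≃ V) (f : V → EuclideanSpace ℝ (Fin d)) :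
    uRg2 (f ∘ e) = uRg2 f := by
  simp only [uRg2, uMu_comp_equiv e f, Fintype.card_congr e, Function.comp]
  rw [Equiv.sum_comp e (fun v => ‖f v - uMu f‖ ^ 2)]

lemma uMu_fst {A B : Type*} [Fintype A] [Fintype B] [Nonempty B]
    (f : A → EuclideanSpace ℝ (Fin d)) :
    uMu (fun p : A × B => f p.1) = uMu f := by
  have hB : (Fintype.card B : ℝ) ≠ 0 := Nat.cast_ne_zero.2 Fintype.card_ne_zero
  simp only [uMu, Fintype.card_prod]
  rw [Fintype.sum_prod_type]
  simp only [Finset.sum_const, Finset.card_univ]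
  rw [← Finset.smul_sum, ← Nat.cast_smul_eq_nsmul ℝ, smul_smul]
  congr 1
  push_cast
  rw [mul_inv, mul_assoc, inv_mul_cancel₀ hB, mul_one]

lemma uRg2_fst {A B : Type*} [Fintype A] [Fintype B] [Nonempty B]
    (f : A → EuclideanSpace ℝ (Fin d)) :
    uRg2 (fun p : A × B => f p.1) = uRg2 f := by
  have hB : (Fintype.card B : ℝ) ≠ 0 := Nat.cast_ne_zero.2 Fintype.card_ne_zero
  simp only [uRg2, uMu_fst, Fintype.card_prod]
  rw [Fintype.sum_prod_type]
  simp only [Finset.sum_const, Finset.card_univ, nsmul_eq_mul]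
  rw [← Finset.mul_sum, ← mul_assoc]
  congr 1
  push_cast
  rw [mul_inv, mul_assoc, inv_mul_cancel₀ hB, mul_one]

lemma uMu_const_add [Nonempty V] (c : EuclideanSpace ℝ (Fin d))
    (f : V → EuclideanSpace ℝ (Fin d)) :
    uMu (fun v => c + f v) = c + uMu f := by
  have h : (Fintype.card V : ℝ) ≠ 0 := Nat.cast_ne_zero.2 Fintype.card_ne_zero
  simp only [uMu, Finset.sum_add_distrib, smul_add, Finset.sum_const, Finset.card_univ,
    ← Nat.cast_smul_eq_nsmul ℝ, smul_smul, inv_mul_cancel₀ h, one_smul]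

lemma uRg2_const_add [Nonempty V] (c : EuclideanSpace ℝ (Fin d))
    (f : V → EuclideanSpace ℝ (Fin d)) :
    uRg2 (fun v => c + f v) = uRg2 f := by
  simp only [uRg2, uMu_const_add, add_sub_add_left_eq_sub]

lemma uMu_smul (r : ℝ) (f : V → EuclideanSpace ℝ (Fin d)) :
    uMu (fun v => r • f v) = r • uMu f := by
  simp only [uMu, ← Finset.smul_sum]
  rw [smul_comm]

lemma uRg2_smul (r : ℝ) (f : V → EuclideanSpace ℝ (Fin d)) :
    uRg2 (fun v => r • f v) = r ^ 2 * uRg2 f := by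
  simp only [uRg2, uMu_smul, ← smul_sub, norm_smul, mul_pow, Real.norm_eq_abs, sq_abs]
  rw [← Finset.mul_sum]
  ring

lemma core_perm {d n : ℕ} (hn : 2 ≤ n) (x : Fin n → EuclideanSpace ℝ (Fin d))
    (a : Fin n → ℝ) :
    uRg2 (fun π : Equiv.Perm (Fin n) => ∑ k, a k • x (π k))
      = (((n : ℝ) * ∑ k, (a k) ^ 2 - (∑ k, a k) ^ 2) / ((n : ℝ) - 1)) * uRg2 x := by
  have hn2 : (2 : ℝ) ≤ (n : ℝ) := by exact_mod_cast hn
  have hn0 : (n : ℝ) ≠ 0 := by linarith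
  have hn1 : (n : ℝ) - 1 ≠ 0 := by linarith
  set y : Fin n → EuclideanSpace ℝ (Fin d) := fun k => x k - uMu x with hy
  have hysum : ∑ k, y k = 0 := by
    have h : ∑ k, y k = (∑ k, x k) - (n : ℝ) • uMu x := by
      simp [hy, Finset.sum_sub_distrib, ← Nat.cast_smul_eq_nsmul ℝ]
    rw [h, uMu, Fintype.card_fin, smul_smul, mul_inv_cancel₀ hn0, one_smul, sub_self]
  set B : Fin n → Fin n → ℝ := fun k l => ∑ π : Equiv.Perm (Fin n), ⟪y (π k), y (π l)⟫ with hB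
  have Bre : ∀ (τ : Equiv.Perm (Fin n)) (k l), B (τ k) (τ l) = B k l := by
    intro τ k l
    have h := Equiv.sum_comp (Equiv.mulRight τ)
      (fun ρ : Equiv.Perm (Fin n) => ⟪y (ρ k), y (ρ l)⟫)
    simpa [hB, Equiv.Perm.mul_apply] using h
  have Szero : ∀ k, (∑ π : Equiv.Perm (Fin n), y (π k)) = 0 := by
    have Sre : ∀ (τ : Equiv.Perm (Fin n)) (k : Fin n),
        (∑ π : Equiv.Perm (Fin n), y (π (τ k))) = ∑ π : Equiv.Perm (Fin n), y (π k) := by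
      intro τ k
      have h := Equiv.sum_comp (Equiv.mulRight τ) (fun ρ : Equiv.Perm (Fin n) => y (ρ k))
      simpa [Equiv.Perm.mul_apply] using h
    intro k
    have hall : ∀ k', (∑ π : Equiv.Perm (Fin n), y (π k'))
        = ∑ π : Equiv.Perm (Fin n), y (π k) := by
      intro k'
      have h := Sre (Equiv.swap k' k) k
      simpa [Equiv.swap_apply_right] using h
    have hsum : (∑ k' : Fin n, ∑ π : Equiv.Perm (Fin n), y (π k')) = 0 := by
      rw [Finset.sum_comm]
      refine Finset.sum_eq_zero fun π _ => ?_
      rw [Equiv.sum_comp π y, hysum]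
    rw [Finset.sum_congr rfl (fun k' _ => hall k'), Finset.sum_const, Finset.card_univ,
      Fintype.card_fin, ← Nat.cast_smul_eq_nsmul ℝ] at hsum
    exact (smul_eq_zero.mp hsum).resolve_left hn0
  set k0 : Fin n := ⟨0, by omega⟩ with hk0
  set l0 : Fin n := ⟨1, by omega⟩ with hl0
  have hk0l0 : k0 ≠ l0 := by simp [hk0, hl0, Fin.ext_iff]
  set α := B k0 k0 with hα
  set β := B k0 l0 with hβ
  have Bdiag : ∀ k, B k k = α := by
    intro k
    have h := Bre (Equiv.swap k0 k) k0 k0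
    simpa [Equiv.swap_apply_left, hα] using h
  have Boff : ∀ k l, k ≠ l → B k l = β := by
    intro k l hkl
    set τ1 := Equiv.swap k0 k with hτ1
    have h1 : τ1 k0 = k := Equiv.swap_apply_left _ _
    have hmk : τ1 l0 ≠ k := by
      rw [← h1]
      exact fun h => hk0l0 (τ1.injective h).symm
    set τ2 := Equiv.swap (τ1 l0) l with hτ2
    have e1 : (τ2 * τ1) k0 = k := by
      rw [Equiv.Perm.mul_apply, h1, hτ2, Equiv.swap_apply_of_ne_of_ne (Ne.symm hmk) hkl]
    have e2 : (τ2 * τ1) l0 = l := by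
      rw [Equiv.Perm.mul_apply, hτ2, Equiv.swap_apply_left]
    calc B k l = B ((τ2 * τ1) k0) ((τ2 * τ1) l0) := by rw [e1, e2]
      _ = B k0 l0 := Bre _ _ _
  set N : ℝ := (Fintype.card (Equiv.Perm (Fin n)) : ℝ) with hN
  have hNne : N ≠ 0 := Nat.cast_ne_zero.2 Fintype.card_ne_zero
  set Q : ℝ := ∑ k, ‖y k‖ ^ 2 with hQ
  have hdiag : (n : ℝ) * α = N * Q := by
    have h1 : (∑ k, B k k) = (n : ℝ) * α := by
      rw [Finset.sum_congr rfl fun k _ => Bdiag k, Finset.sum_const, Finset.card_univ,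
        Fintype.card_fin, nsmul_eq_mul]
    have h2 : (∑ k, B k k) = N * Q := by
      simp only [hB]
      rw [Finset.sum_comm]
      have hπ : ∀ π : Equiv.Perm (Fin n), (∑ k, ⟪y (π k), y (π k)⟫) = Q := by
        intro π
        rw [hQ, ← Equiv.sum_comp π (fun k => ‖y k‖ ^ 2)]
        exact Finset.sum_congr rfl fun k _ => real_inner_self_eq_norm_sq _
      rw [Finset.sum_congr rfl fun π _ => hπ π, Finset.sum_const, Finset.card_univ,
        nsmul_eq_mul, hN]
    rw [← h1, h2]
  have hrow : α + ((n : ℝ) - 1) * β = 0 := by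
    have h0 : (∑ l, B k0 l) = 0 := by
      simp only [hB]
      rw [Finset.sum_comm]
      refine Finset.sum_eq_zero fun π _ => ?_
      rw [← inner_sum, Equiv.sum_comp π y, hysum, inner_zero_right]
    have h1 : (∑ l, B k0 l) = α + ((n : ℝ) - 1) * β := by
      rw [← Finset.add_sum_erase _ _ (Finset.mem_univ k0)]
      rw [Finset.sum_congr rfl fun l hl => Boff k0 l (Finset.ne_of_mem_erase hl).symm,
        Finset.sum_const, Finset.card_erase_of_mem (Finset.mem_univ _), Finset.card_univ,
        Fintype.card_fin, nsmul_eq_mul, Nat.cast_sub (by omega : 1 ≤ n), Nat.cast_one, ← hα]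
    linarith [h0, h1]
  have hxy : ∀ π : Equiv.Perm (Fin n), (∑ k, a k • x (π k))
      = (∑ k, a k • y (π k)) + (∑ k, a k) • uMu x := by
    intro π
    rw [Finset.sum_smul, ← Finset.sum_add_distrib]
    refine Finset.sum_congr rfl fun k _ => ?_
    simp only [hy]
    rw [smul_sub]
    abel
  have hmuF : uMu (fun π : Equiv.Perm (Fin n) => ∑ k, a k • x (π k))
      = (∑ k, a k) • uMu x := by
    rw [uMu, Finset.sum_congr rfl fun π _ => hxy π]
    have h3 : (∑ π : Equiv.Perm (Fin n), ∑ k, a k • y (π k)) = 0 := by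
      rw [Finset.sum_comm]
      refine Finset.sum_eq_zero fun k _ => ?_
      rw [← Finset.smul_sum, Szero k, smul_zero]
    rw [Finset.sum_add_distrib, h3, zero_add, Finset.sum_const, Finset.card_univ,
      ← Nat.cast_smul_eq_nsmul ℝ, smul_smul, ← hN, inv_mul_cancel₀ hNne, one_smul]
  have hRg : uRg2 (fun π : Equiv.Perm (Fin n) => ∑ k, a k • x (π k))
      = N⁻¹ * ∑ π : Equiv.Perm (Fin n), ‖∑ k, a k • y (π k)‖ ^ 2 := by
    rw [uRg2, hmuF, ← hN]
    congr 1
    refine Finset.sum_congr rfl fun π _ => ?_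
    rw [hxy π, add_sub_cancel_right]
  have hT : (∑ π : Equiv.Perm (Fin n), ‖∑ k, a k • y (π k)‖ ^ 2)
      = (α - β) * (∑ k, (a k) ^ 2) + β * (∑ k, a k) ^ 2 := by
    have expand : ∀ π : Equiv.Perm (Fin n),
        ‖∑ k, a k • y (π k)‖ ^ 2 = ∑ k, ∑ l, a k * a l * ⟪y (π k), y (π l)⟫ := by
      intro π
      rw [← real_inner_self_eq_norm_sq, sum_inner]
      refine Finset.sum_congr rfl fun k _ => ?_
      rw [inner_sum]
      refine Finset.sum_congr rfl fun l _ => ?_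
      rw [real_inner_smul_left, real_inner_smul_right]
      ring
    rw [Finset.sum_congr rfl fun π _ => expand π, Finset.sum_comm]
    have step : ∀ k : Fin n,
        (∑ π : Equiv.Perm (Fin n), ∑ l, a k * a l * ⟪y (π k), y (π l)⟫)
        = (α - β) * (a k) ^ 2 + β * (a k * ∑ l, a l) := by
      intro k
      rw [Finset.sum_comm]
      have hl : ∀ l : Fin n,
          (∑ π : Equiv.Perm (Fin n), a k * a l * ⟪y (π k), y (π l)⟫)
          = a k * a l * B k l := by
        intro l
        rw [← Finset.mul_sum, hB]
      rw [Finset.sum_congr rfl fun l _ => hl l]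
      have hsplit : ∀ l : Fin n, a k * a l * B k l
          = a k * a l * β + (if l = k then (a k) ^ 2 * (α - β) else 0) := by
        intro l
        by_cases h : l = k
        · subst h; rw [Bdiag, if_pos rfl]; ring
        · rw [Boff k l (Ne.symm h), if_neg h]; ring
      rw [Finset.sum_congr rfl fun l _ => hsplit l, Finset.sum_add_distrib,
        Finset.sum_ite_eq' Finset.univ k (fun _ => (a k) ^ 2 * (α - β))]
      simp only [Finset.mem_univ, if_true]
      rw [← Finset.sum_mul, ← Finset.mul_sum]
      ring
    rw [Finset.sum_congr rfl fun k _ => step k, Finset.sum_add_distrib,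
      ← Finset.mul_sum, ← Finset.mul_sum, ← Finset.sum_mul]
    ring
  rw [hRg, hT]
  have hux : uRg2 x = (n : ℝ)⁻¹ * Q := by
    rw [uRg2, Fintype.card_fin, hQ]
  have hαv : α = N * Q / (n : ℝ) := by field_simp; linarith
  have hβv : β = -(N * Q) / ((n : ℝ) * ((n : ℝ) - 1)) := by
    rw [hαv] at hrow
    field_simp at hrow ⊢
    linarith
  rw [hαv, hβv, hux]
  field_simp
  ring

lemma sum_range_cast (n : ℕ) :
    (∑ j ∈ Finset.range n, (j : ℝ)) = (n : ℝ) * ((n : ℝ) - 1) / 2 := by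
  induction n with
  | zero => simp
  | succ m ih =>
    rw [Finset.sum_range_succ, ih]
    push_cast
    ring

lemma sum_range_cast_sq (n : ℕ) :
    (∑ j ∈ Finset.range n, (j : ℝ) ^ 2)
      = (n : ℝ) * ((n : ℝ) - 1) * (2 * (n : ℝ) - 1) / 6 := by
  induction n with
  | zero => simp
  | succ m ih =>
    rw [Finset.sum_range_succ, ih]
    push_cast
    ring

lemma count_smul {d m : ℕ} (k : ℕ) (v : EuclideanSpace ℝ (Fin d)) :
    (∑ j : Fin m, if k ≤ (j : ℕ) then v else 0) = ((m - k : ℕ) : ℝ) • v := by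
  rw [Fin.sum_univ_eq_sum_range (fun j => if k ≤ j then v else 0) m, ← Finset.sum_filter]
  have hf : (Finset.range m).filter (fun j => k ≤ j) = Finset.Ico k m := by
    ext j
    simp [Finset.mem_filter, Finset.mem_range, Finset.mem_Ico, and_comm]
  rw [hf, Finset.sum_const, Nat.card_Ico, ← Nat.cast_smul_eq_nsmul ℝ]

end helpers

/-- The center-of-mass cloud `Mᵢ : σ ↦ μ(X^σ_i)` (unit weights, indexed by `σ ∈ S`)
satisfies `Rg²(Mᵢ) = (n²(n+1)/(12(n−1)²))·Rg²(Wᵢ)`. -/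
theorem rg2_center_of_mass_cloud {d n v' e' : ℕ} (hd : 1 ≤ d) (hn : 2 ≤ n)
    (head tl : Fin e' → Fin v')
    (X' : Fin v' → EuclideanSpace ℝ (Fin d))
    (w : Fin e' → Fin n → EuclideanSpace ℝ (Fin d))
    (hw : ∀ i, ∑ j, w i j = X' (head i) - X' (tl i))
    (i : Fin e') :
    uRg2 (fun σ : Fin e' → Equiv.Perm (Fin n) =>
        uMu (fun j : Fin (n - 1) => xpos X' tl w σ i j))
      = ((n : ℝ) ^ 2 * ((n : ℝ) + 1) / (12 * ((n : ℝ) - 1) ^ 2)) * uRg2 (w i) := by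
  haveI : Nonempty (Fin (n - 1)) := ⟨⟨0, by omega⟩⟩
  have hn2 : (2 : ℝ) ≤ (n : ℝ) := by exact_mod_cast hn
  have hn1 : (n : ℝ) - 1 ≠ 0 := by linarith
  have hcast : ((n - 1 : ℕ) : ℝ) = (n : ℝ) - 1 := by
    rw [Nat.cast_sub (by omega : 1 ≤ n), Nat.cast_one]
  have hmu1 : ∀ σ : Fin e' → Equiv.Perm (Fin n),
      uMu (fun j : Fin (n - 1) => xpos X' tl w σ i j)
        = X' (tl i) + ((n : ℝ) - 1)⁻¹ •
            ∑ k : Fin n, ((n - 1 - (k : ℕ) : ℕ) : ℝ) • w i (σ i k) := by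
    intro σ
    have hfn : (fun j : Fin (n - 1) => xpos X' tl w σ i j)
        = fun j : Fin (n - 1) =>
            X' (tl i) + ∑ k : Fin n, if (k : ℕ) ≤ (j : ℕ) then w i (σ i k) else 0 := rfl
    rw [hfn, uMu_const_add]
    congr 1
    rw [uMu, Fintype.card_fin, Finset.sum_comm,
      Finset.sum_congr rfl fun (k : Fin n) _ => count_smul k.val (w i (σ i k)), hcast]
  rw [funext hmu1, uRg2_const_add]
  have hstep : uRg2 (fun σ : Fin e' → Equiv.Perm (Fin n) =>
        ((n : ℝ) - 1)⁻¹ • ∑ k : Fin n, ((n - 1 - (k : ℕ) : ℕ) : ℝ) • w i (σ i k))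
      = uRg2 (fun π : Equiv.Perm (Fin n) =>
        ((n : ℝ) - 1)⁻¹ • ∑ k : Fin n, ((n - 1 - (k : ℕ) : ℕ) : ℝ) • w i (π k)) := by
    have h1 := uRg2_comp_equiv (Equiv.funSplitAt i (Equiv.Perm (Fin n)))
      (fun p : Equiv.Perm (Fin n) × ({ j // j ≠ i } → Equiv.Perm (Fin n)) =>
        ((n : ℝ) - 1)⁻¹ • ∑ k : Fin n, ((n - 1 - (k : ℕ) : ℕ) : ℝ) • w i (p.1 k))
    have h2 := uRg2_fst (A := Equiv.Perm (Fin n))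
      (B := { j // j ≠ i } → Equiv.Perm (Fin n))
      (fun π => ((n : ℝ) - 1)⁻¹ • ∑ k : Fin n, ((n - 1 - (k : ℕ) : ℕ) : ℝ) • w i (π k))
    exact h1.trans h2
  rw [hstep, uRg2_smul,
    core_perm hn (w i) (fun k => ((n - 1 - (k : ℕ) : ℕ) : ℝ))]
  have Sa1 : (∑ k : Fin n, ((n - 1 - (k : ℕ) : ℕ) : ℝ)) = (n : ℝ) * ((n : ℝ) - 1) / 2 := by
    rw [Fin.sum_univ_eq_sum_range (fun k => ((n - 1 - k : ℕ) : ℝ)) n,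
      Finset.sum_range_reflect (fun m => (m : ℝ)) n, sum_range_cast]
  have Sa2 : (∑ k : Fin n, ((n - 1 - (k : ℕ) : ℕ) : ℝ) ^ 2)
      = (n : ℝ) * ((n : ℝ) - 1) * (2 * (n : ℝ) - 1) / 6 := by
    rw [Fin.sum_univ_eq_sum_range (fun k => ((n - 1 - k : ℕ) : ℝ) ^ 2) n,
      Finset.sum_range_reflect (fun m => (m : ℝ) ^ 2) n, sum_range_cast_sq]
  rw [Sa1, Sa2]
  field_simp
  ring
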